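/- arXiv:1809.06331 — 4 statements merged into one kernel-verified Lean document; each statement's English description precedes it below -/
import Mathlib

section
/- Let B be the signed incidence matrix of a tree on n nodes with m = n − 1 edges, let ω₁, …, ωₙ be strictly positive reals with Ω = diag(ω₁, …, ωₙ), and for each node i let dᵢ = #{edges k : B i k ≠ 0} denote its degree. Then the smallest eigenvalue of Bᵀ Ω B satisfies λ₁(Bᵀ Ω B) ≥ min over edges k of ((2 − d_{i_k}) ω_{i_k} + (2 − d_{j_k}) ω_{j_k}), where i_k and j_k are the two endpoints of edge k. -/
/-!
Apply Geršgorin's circle theorem to row `k` of `A = Bᵀ Ω B`. Since column `k` of `B` is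
`eᵢ - eⱼ` for the endpoints `i, j` of edge `k`, we get `A k l = ωᵢ Bᵢₗ - ωⱼ Bⱼₗ`; so `A k k = ωᵢ + ωⱼ`
and `|A k l| ≤ ωᵢ |Bᵢₗ| + ωⱼ |Bⱼₗ|`. As `∑ₗ |Bᵢₗ| = dᵢ` and `|Bᵢₖ| = 1`, the radius is at most
`(dᵢ - 1) ωᵢ + (dⱼ - 1) ωⱼ`, and the left end of the disc is the claimed bound.
-/

open Matrix Finset

namespace Matrix

theorem IsHermitian.exists_diag_sub_sum_abs_le_eigenvalues {ι : Type*} [Fintype ι] [DecidableEq ι]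
    {A : Matrix ι ι ℝ} (hA : A.IsHermitian) (j : ι) :
    ∃ k, A k k - ∑ l ∈ univ.erase k, |A k l| ≤ hA.eigenvalues j := by
  have hev : Module.End.HasEigenvalue (toLin' A) (hA.eigenvalues j) :=
    .of_mem_spectrum (by rw [spectrum_toLin']; exact hA.eigenvalues_mem_spectrum_real j)
  obtain ⟨k, hk⟩ := eigenvalue_mem_ball hev
  rw [Metric.mem_closedBall, Real.dist_eq, abs_sub_le_iff] at hk
  simp only [Real.norm_eq_abs] at hk
  exact ⟨k, by linarith [hk.2]⟩

variable {ι κ : Type*}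

structure IsSignedIncidence (B : Matrix ι κ ℝ) (e₁ e₂ : κ → ι) : Prop where
  apply_fst : ∀ k, B (e₁ k) k = 1
  apply_snd : ∀ k, B (e₂ k) k = -1
  apply_of_ne : ∀ k l, l ≠ e₁ k → l ≠ e₂ k → B l k = 0

namespace IsSignedIncidence

variable {B : Matrix ι κ ℝ} {e₁ e₂ : κ → ι}

theorem ne (hB : IsSignedIncidence B e₁ e₂) (k : κ) : e₁ k ≠ e₂ k := fun h ↦ by
  have := (hB.apply_fst k).symm.trans (h ▸ hB.apply_snd k)
  norm_num at this

theorem abs_apply (hB : IsSignedIncidence B e₁ e₂) (i : ι) (k : κ) :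
    |B i k| = if B i k ≠ 0 then 1 else 0 := by
  by_cases h₁ : i = e₁ k
  · subst h₁; simp [hB.apply_fst k]
  by_cases h₂ : i = e₂ k
  · subst h₂; simp [hB.apply_snd k]
  · simp [hB.apply_of_ne k i h₁ h₂]

theorem sum_abs_row_eq_card [Fintype κ] (hB : IsSignedIncidence B e₁ e₂) (i : ι) :
    ∑ k, |B i k| = Nat.card {k : κ // B i k ≠ 0} := by
  classical
  simp only [hB.abs_apply, sum_boole, Nat.card_eq_fintype_card, Fintype.card_subtype]

variable [Fintype ι] [DecidableEq ι] (ω : ι → ℝ)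

theorem transpose_mul_diagonal_mul_apply (hB : IsSignedIncidence B e₁ e₂) (k l : κ) :
    (Bᵀ * diagonal ω * B) k l = ω (e₁ k) * B (e₁ k) l - ω (e₂ k) * B (e₂ k) l := by
  rw [mul_apply, Fintype.sum_eq_add (e₁ k) (e₂ k) (hB.ne k)]
  · simp only [mul_diagonal, transpose_apply, hB.apply_fst, hB.apply_snd]
    ring
  · intro i hi
    simp [hB.apply_of_ne k i hi.1 hi.2]

theorem sum_abs_offDiag_transpose_mul_diagonal_mul_le [Fintype κ] [DecidableEq κ]
    (hω : ∀ i, 0 ≤ ω i) (hB : IsSignedIncidence B e₁ e₂) (k : κ) :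
    ∑ l ∈ univ.erase k, |(Bᵀ * diagonal ω * B) k l|
      ≤ ω (e₁ k) * (Nat.card {l // B (e₁ k) l ≠ 0} - 1)
        + ω (e₂ k) * (Nat.card {l // B (e₂ k) l ≠ 0} - 1) := by
  simp only [hB.transpose_mul_diagonal_mul_apply, ← hB.sum_abs_row_eq_card]
  calc ∑ l ∈ univ.erase k, |ω (e₁ k) * B (e₁ k) l - ω (e₂ k) * B (e₂ k) l|
      ≤ ∑ l ∈ univ.erase k, (ω (e₁ k) * |B (e₁ k) l| + ω (e₂ k) * |B (e₂ k) l|) := by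
        refine sum_le_sum fun l _ ↦ (abs_sub _ _).trans_eq ?_
        rw [abs_mul, abs_mul, abs_of_nonneg (hω _), abs_of_nonneg (hω _)]
    _ = ω (e₁ k) * (∑ l, |B (e₁ k) l| - 1) + ω (e₂ k) * (∑ l, |B (e₂ k) l| - 1) := by
        rw [sum_add_distrib, ← mul_sum, ← mul_sum, sum_erase_eq_sub (mem_univ k),
          sum_erase_eq_sub (mem_univ k), hB.apply_fst, hB.apply_snd, abs_one, abs_neg, abs_one]

theorem exists_two_sub_card_mul_add_le_eigenvalues [Fintype κ] [DecidableEq κ]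
    (hω : ∀ i, 0 ≤ ω i) (hB : IsSignedIncidence B e₁ e₂)
    (hA : (Bᵀ * diagonal ω * B).IsHermitian) (j : κ) :
    ∃ k, (2 - (Nat.card {l // B (e₁ k) l ≠ 0} : ℝ)) * ω (e₁ k)
        + (2 - (Nat.card {l // B (e₂ k) l ≠ 0} : ℝ)) * ω (e₂ k) ≤ hA.eigenvalues j := by
  obtain ⟨k, hk⟩ := hA.exists_diag_sub_sum_abs_le_eigenvalues j
  have hdiag : (Bᵀ * diagonal ω * B) k k = ω (e₁ k) + ω (e₂ k) := by
    rw [hB.transpose_mul_diagonal_mul_apply, hB.apply_fst, hB.apply_snd]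
    ring
  have hrad := hB.sum_abs_offDiag_transpose_mul_diagonal_mul_le ω hω k
  exact ⟨k, by linarith⟩

end IsSignedIncidence

end Matrix

theorem smallest_eigenvalue_degree_lower_bound_general
    {n m : ℕ} (hm : 0 < m)
    (B : Matrix (Fin n) (Fin m) ℝ)
    (e₁ e₂ : Fin m → Fin n)
    (hB1 : ∀ k, B (e₁ k) k = 1)
    (hB2 : ∀ k, B (e₂ k) k = -1)
    (hB0 : ∀ k, ∀ l, l ≠ e₁ k → l ≠ e₂ k → B l k = 0)
    (ω : Fin n → ℝ) (hω : ∀ i, 0 < ω i)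
    (hA : (B.transpose * Matrix.diagonal ω * B).IsHermitian)
    (d : Fin n → ℕ) (hd : ∀ i, d i = Nat.card {k : Fin m // B i k ≠ 0}) :
    (⨅ k : Fin m,
        ((2 - (d (e₁ k) : ℝ)) * ω (e₁ k) + (2 - (d (e₂ k) : ℝ)) * ω (e₂ k)))
      ≤ ⨅ k, hA.eigenvalues k := by
  have : Nonempty (Fin m) := ⟨⟨0, hm⟩⟩
  have hB : IsSignedIncidence B e₁ e₂ := ⟨hB1, hB2, hB0⟩
  simp only [hd]
  exact ciInf_mono_of_forall_exists (Finite.bddBelow_range _)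
    (hB.exists_two_sub_card_mul_add_le_eigenvalues ω (fun i ↦ (hω i).le) hA)

/-- Geršgorin-type lower bound for the smallest eigenvalue of the weighted edge
Laplacian `Bᵀ Ω B` of a tree:
`λ₁(Bᵀ Ω B) ≥ min over edges k of ((2 − d_{i_k}) ω_{i_k} + (2 − d_{j_k}) ω_{j_k})`,
where `d_i` is the degree of node `i` (the number of edges incident to it). -/
theorem smallest_eigenvalue_degree_lower_bound
    {n m : ℕ} (hmn : m = n - 1) (hm : 0 < m)
    (B : Matrix (Fin n) (Fin m) ℝ)
    (e₁ e₂ : Fin m → Fin n)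
    (hne : ∀ k, e₁ k ≠ e₂ k)
    (hB1 : ∀ k, B (e₁ k) k = 1)
    (hB2 : ∀ k, B (e₂ k) k = -1)
    (hB0 : ∀ k, ∀ l, l ≠ e₁ k → l ≠ e₂ k → B l k = 0)
    (hInv : IsUnit (B.transpose * B))
    (ω : Fin n → ℝ) (hω : ∀ i, 0 < ω i)
    (hA : (B.transpose * Matrix.diagonal ω * B).IsHermitian)
    (d : Fin n → ℕ) (hd : ∀ i, d i = Nat.card {k : Fin m // B i k ≠ 0}) :
    (⨅ k : Fin m,
        ((2 - (d (e₁ k) : ℝ)) * ω (e₁ k) + (2 - (d (e₂ k) : ℝ)) * ω (e₂ k)))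
      ≤ ⨅ k, hA.eigenvalues k :=
  smallest_eigenvalue_degree_lower_bound_general hm B e₁ e₂ hB1 hB2 hB0 ω hω hA d hd
end

section
/- Let B be the signed incidence matrix of a tree on n nodes with m = n − 1 edges, let ω₁, …, ωₙ be strictly positive reals with Ω = diag(ω₁, …, ωₙ), let κ > 0, and let λ₁ denote the smallest eigenvalue of Bᵀ Ω B. Let Δ = max over edges k of |ω_{i_k} − ω_{j_k}|. Suppose θ : ℝ → (Fin n → ℝ) is a solution of the frequency-weighted Kuramoto dynamics θ̇ᵢ = ωᵢ (1 − κ ∑_k B i k sin((Bᵀθ)_k)). Then the Lyapunov function V(t) = 2 ∑_k sin²((Bᵀθ(t))_k / 2) is differentiable and satisfies, for every t, V'(t) ≤ Δ ∑_k |sin((Bᵀθ(t))_k)| − κ λ₁ ∑_k sin²((Bᵀθ(t))_k). -/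
open Matrix

/-!
Write `y = Bᵀθ` for the edge differences and `s = sin y`. Since `2 sin²(y/2) = 1 - cos y`, the
derivative of `V` is `s ⬝ᵥ ẏ`, and the dynamics give `ẏ = Bᵀω - κ (Bᵀ Ω B) s`. On a signed
incidence matrix `(Bᵀω)_k = ω_{i_k} - ω_{j_k}`, which is at most `Δ` in absolute value, and the
coupling term is controlled by the Rayleigh bound `λ₁ (s ⬝ᵥ s) ≤ s ⬝ᵥ (Bᵀ Ω B) s`.
-/

namespace Matrix

variable {ι μ : Type*} [Fintype ι]

section Rayleigh

variable [DecidableEq ι] {A : Matrix ι ι ℝ} (hA : A.IsHermitian) {c : ℝ}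

theorem IsHermitian.posSemidef_sub_smul_one (hc : ∀ i, c ≤ hA.eigenvalues i) :
    (A - c • 1).PosSemidef := by
  set U : Matrix ι ι ℝ := (hA.eigenvectorUnitary : Matrix ι ι ℝ)
  have hU : U * star U = 1 := mem_unitaryGroup_iff.mp hA.eigenvectorUnitary.2
  have hdiag : U * diagonal (fun i => hA.eigenvalues i - c) * star U = A - c • 1 := by
    have hshift : diagonal (fun i => hA.eigenvalues i - c) = diagonal hA.eigenvalues - c • 1 := by
      rw [smul_one_eq_diagonal, diagonal_sub]
    rw [hshift, mul_sub, sub_mul, Matrix.mul_smul, Matrix.mul_one, Matrix.smul_mul, hU]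
    congr 1
    conv_rhs => rw [hA.spectral_theorem, Unitary.conjStarAlgAut_apply]
    rfl
  rw [← hdiag]
  exact (posSemidef_diagonal_iff.mpr fun i => sub_nonneg.2 (hc i)).mul_mul_conjTranspose_same U

theorem IsHermitian.mul_dotProduct_self_le (hc : ∀ i, c ≤ hA.eigenvalues i) (x : ι → ℝ) :
    c * (x ⬝ᵥ x) ≤ x ⬝ᵥ A *ᵥ x := by
  have := (hA.posSemidef_sub_smul_one hc).dotProduct_mulVec_nonneg x
  simp only [star_trivial, sub_mulVec, smul_mulVec, one_mulVec, dotProduct_sub,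
    dotProduct_smul, smul_eq_mul] at this
  linarith

end Rayleigh

theorem transpose_mulVec_apply_of_incidence {B : Matrix ι μ ℝ} {e₁ e₂ : μ → ι} {k : μ}
    (hne : e₁ k ≠ e₂ k) (hB1 : B (e₁ k) k = 1) (hB2 : B (e₂ k) k = -1)
    (hB0 : ∀ l, l ≠ e₁ k → l ≠ e₂ k → B l k = 0) (v : ι → ℝ) :
    (Bᵀ *ᵥ v) k = v (e₁ k) - v (e₂ k) := by
  rw [mulVec, dotProduct, Fintype.sum_eq_add (e₁ k) (e₂ k) hne
    fun l hl => by simp [hB0 l hl.1 hl.2]]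
  simp [hB1, hB2, sub_eq_add_neg]

theorem dotProduct_le_mul_sum_abs [Fintype μ] {x g : μ → ℝ} {c : ℝ} (hg : ∀ k, |g k| ≤ c) :
    x ⬝ᵥ g ≤ c * ∑ k, |x k| := by
  rw [dotProduct, Finset.mul_sum]
  refine Finset.sum_le_sum fun k _ => ?_
  calc x k * g k ≤ |x k| * |g k| := (le_abs_self _).trans (abs_mul _ _).le
    _ ≤ c * |x k| := by rw [mul_comm]; gcongr; exact hg k

theorem hasDerivAt_mulVec_apply (A : Matrix μ ι ℝ) {x : ℝ → ι → ℝ} {x' : ι → ℝ} {t : ℝ}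
    (hx : ∀ i, HasDerivAt (fun s => x s i) (x' i) t) (k : μ) :
    HasDerivAt (fun s => (A *ᵥ x s) k) ((A *ᵥ x') k) t :=
  HasDerivAt.fun_sum fun i _ => (hx i).const_mul (A k i)

end Matrix

theorem hasDerivAt_two_mul_sum_sin_half_sq {μ : Type*} [Fintype μ] {y : ℝ → μ → ℝ}
    {y' : μ → ℝ} {t : ℝ} (hy : ∀ k, HasDerivAt (fun s => y s k) (y' k) t) :
    HasDerivAt (fun s => 2 * ∑ k, Real.sin (y s k / 2) ^ 2)
      (∑ k, Real.sin (y t k) * y' k) t := by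
  have hV : (fun s => 2 * ∑ k, Real.sin (y s k / 2) ^ 2)
      = fun s => ∑ k, (1 - Real.cos (y s k)) := by
    ext s
    rw [Finset.mul_sum]
    refine Finset.sum_congr rfl fun k _ => ?_
    rw [Real.sin_sq_eq_half_sub, mul_div_cancel₀ _ two_ne_zero]
    ring
  rw [hV]
  refine (HasDerivAt.fun_sum fun k _ => ((hy k).cos).const_sub 1).congr_deriv ?_
  simp only [neg_mul, neg_neg]

theorem lyapunov_derivative_bound_general
    {n m : ℕ}
    (B : Matrix (Fin n) (Fin m) ℝ)
    (e₁ e₂ : Fin m → Fin n)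
    (hne : ∀ k, e₁ k ≠ e₂ k)
    (hB1 : ∀ k, B (e₁ k) k = 1)
    (hB2 : ∀ k, B (e₂ k) k = -1)
    (hB0 : ∀ k, ∀ l, l ≠ e₁ k → l ≠ e₂ k → B l k = 0)
    (ω : Fin n → ℝ)
    (hA : (B.transpose * Matrix.diagonal ω * B).IsHermitian)
    (lam1 : ℝ) (hlam1 : lam1 = ⨅ k, hA.eigenvalues k)
    (Δ : ℝ) (hΔ : Δ = ⨆ k : Fin m, |ω (e₁ k) - ω (e₂ k)|)
    (κ : ℝ) (hκ : 0 < κ)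
    (θ : ℝ → Fin n → ℝ)
    (hdyn : ∀ t i, HasDerivAt (fun s => θ s i)
      (ω i * (1 - κ * ∑ k, B i k * Real.sin (B.transpose.mulVec (θ t) k))) t) :
    ∀ t, ∃ v,
      HasDerivAt (fun s => 2 * ∑ k, Real.sin (B.transpose.mulVec (θ s) k / 2) ^ 2) v t ∧
      v ≤ Δ * (∑ k, |Real.sin (B.transpose.mulVec (θ t) k)|)
            - κ * lam1 * ∑ k, Real.sin (B.transpose.mulVec (θ t) k) ^ 2 := by
  intro t
  set s : Fin m → ℝ := fun k => Real.sin ((Bᵀ *ᵥ θ t) k)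
  set A := Bᵀ * diagonal ω * B
  set g : Fin m → ℝ := fun k => ω (e₁ k) - ω (e₂ k)
  have hnode : ∀ i, HasDerivAt (fun s => θ s i) ((ω - κ • (diagonal ω *ᵥ (B *ᵥ s))) i) t := by
    intro i
    convert hdyn t i using 1
    rw [Pi.sub_apply, Pi.smul_apply, mulVec_diagonal, smul_eq_mul]
    simp only [mulVec, dotProduct, s]
    ring
  have hedge : ∀ k, HasDerivAt (fun s => (Bᵀ *ᵥ θ s) k) (g k - κ * (A *ᵥ s) k) t := by
    intro k
    convert hasDerivAt_mulVec_apply Bᵀ hnode k using 1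
    rw [mulVec_sub, mulVec_smul, mulVec_mulVec, mulVec_mulVec, Pi.sub_apply, Pi.smul_apply,
      transpose_mulVec_apply_of_incidence (hne k) (hB1 k) (hB2 k) (hB0 k), smul_eq_mul]
  refine ⟨_, hasDerivAt_two_mul_sum_sin_half_sq hedge, ?_⟩
  have hgap : ∀ k, |g k| ≤ Δ := fun k =>
    hΔ ▸ le_ciSup (f := fun k => |g k|) (Set.finite_range _).bddAbove k
  have hcoupling : lam1 * (s ⬝ᵥ s) ≤ s ⬝ᵥ A *ᵥ s :=
    hA.mul_dotProduct_self_le (fun i => hlam1 ▸ ciInf_le (Set.finite_range _).bddBelow i) s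
  calc ∑ k, s k * (g k - κ * (A *ᵥ s) k) = s ⬝ᵥ g - κ * (s ⬝ᵥ A *ᵥ s) := by
        change s ⬝ᵥ (g - κ • (A *ᵥ s)) = _
        rw [dotProduct_sub, dotProduct_smul, smul_eq_mul]
    _ ≤ Δ * ∑ k, |s k| - κ * (lam1 * (s ⬝ᵥ s)) := by
        gcongr
        exact dotProduct_le_mul_sum_abs hgap
    _ = _ := by simp only [dotProduct, pow_two, s]; ring

/-- Along solutions of the frequency-weighted Kuramoto dynamics on a tree, the
Lyapunov function `V(t) = 2 ∑_k sin²((Bᵀθ(t))_k / 2)` is differentiable and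
its derivative satisfies
`V'(t) ≤ Δ ∑_k |sin((Bᵀθ(t))_k)| − κ λ₁ ∑_k sin²((Bᵀθ(t))_k)`,
where `Δ = max_k |ω_{i_k} − ω_{j_k}|` and `λ₁` is the smallest eigenvalue of
`Bᵀ Ω B`. -/
theorem lyapunov_derivative_bound
    {n m : ℕ} (hmn : m = n - 1) (hm : 0 < m)
    (B : Matrix (Fin n) (Fin m) ℝ)
    (e₁ e₂ : Fin m → Fin n)
    (hne : ∀ k, e₁ k ≠ e₂ k)
    (hB1 : ∀ k, B (e₁ k) k = 1)
    (hB2 : ∀ k, B (e₂ k) k = -1)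
    (hB0 : ∀ k, ∀ l, l ≠ e₁ k → l ≠ e₂ k → B l k = 0)
    (hInv : IsUnit (B.transpose * B))
    (ω : Fin n → ℝ) (hω : ∀ i, 0 < ω i)
    (hA : (B.transpose * Matrix.diagonal ω * B).IsHermitian)
    (lam1 : ℝ) (hlam1 : lam1 = ⨅ k, hA.eigenvalues k)
    (Δ : ℝ) (hΔ : Δ = ⨆ k : Fin m, |ω (e₁ k) - ω (e₂ k)|)
    (κ : ℝ) (hκ : 0 < κ)
    (θ : ℝ → Fin n → ℝ)
    (hdyn : ∀ t i, HasDerivAt (fun s => θ s i)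
      (ω i * (1 - κ * ∑ k, B i k * Real.sin (B.transpose.mulVec (θ t) k))) t) :
    ∀ t, ∃ v,
      HasDerivAt (fun s => 2 * ∑ k, Real.sin (B.transpose.mulVec (θ s) k / 2) ^ 2) v t ∧
      v ≤ Δ * (∑ k, |Real.sin (B.transpose.mulVec (θ t) k)|)
            - κ * lam1 * ∑ k, Real.sin (B.transpose.mulVec (θ t) k) ^ 2 :=
  lyapunov_derivative_bound_general B e₁ e₂ hne hB1 hB2 hB0 ω hA lam1 hlam1 Δ hΔ κ hκ θ hdyn
end

section
/- (Lyapunov decrease for the relative-frequency system.) Let A be a real symmetric positive definite m × m matrix, κ > 0, ε ∈ (0, π/2), and let w : ℝ → (Fin m → ℝ) satisfy sin ε ≤ w(t)_k ≤ 1 for all t and k. Suppose z : ℝ → (Fin m → ℝ) is differentiable in each coordinate and satisfies z'(t) = −κ A · diag(w(t)) · z(t) for all t. Then the function V(t) = z(t)ᵀ A⁻¹ z(t) is differentiable and satisfies V'(t) ≤ −κ sin ε · ‖z(t)‖² for all t, where ‖z(t)‖² = ∑_k z(t)_k². -/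
open Matrix

/-!
Since `A⁻¹` is symmetric, `V' = 2 z ⬝ᵥ A⁻¹ z' = -2κ z ⬝ᵥ A⁻¹ A diag(w) z = -2κ ∑ₖ wₖ zₖ²`,
and `wₖ ≥ sin ε ≥ 0` turns this into `V' ≤ -2κ sin ε ‖z‖² ≤ -κ sin ε ‖z‖²`.
-/

section

variable {ι 𝕜 : Type*} [Fintype ι] [NontriviallyNormedField 𝕜]

theorem HasDerivAt.dotProduct {u v : 𝕜 → ι → 𝕜} {u' v' : ι → 𝕜} {t : 𝕜}
    (hu : HasDerivAt u u' t) (hv : HasDerivAt v v' t) :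
    HasDerivAt (fun s => u s ⬝ᵥ v s) (u' ⬝ᵥ v t + u t ⬝ᵥ v') t := by
  simp only [_root_.dotProduct, ← Finset.sum_add_distrib]
  exact HasDerivAt.fun_sum fun i _ => (hasDerivAt_pi.1 hu i).mul (hasDerivAt_pi.1 hv i)

theorem HasDerivAt.mulVec [CompleteSpace 𝕜] (B : Matrix ι ι 𝕜) {u : 𝕜 → ι → 𝕜} {u' : ι → 𝕜}
    {t : 𝕜} (hu : HasDerivAt u u' t) : HasDerivAt (fun s => B *ᵥ u s) (B *ᵥ u') t :=
  B.mulVecLin.toContinuousLinearMap.hasFDerivAt.comp_hasDerivAt t hu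

theorem Matrix.IsSymm.dotProduct_mulVec_comm {R : Type*} [CommSemiring R] {B : Matrix ι ι R}
    (hB : B.IsSymm) (x y : ι → R) : x ⬝ᵥ B *ᵥ y = y ⬝ᵥ B *ᵥ x := by
  rw [dotProduct_mulVec, ← mulVec_transpose, hB.eq, dotProduct_comm]

theorem Matrix.IsSymm.hasDerivAt_dotProduct_mulVec_self [CompleteSpace 𝕜] {B : Matrix ι ι 𝕜}
    (hB : B.IsSymm) {z : 𝕜 → ι → 𝕜} {z' : ι → 𝕜} {t : 𝕜} (hz : HasDerivAt z z' t) :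
    HasDerivAt (fun s => z s ⬝ᵥ B *ᵥ z s) (2 * (z t ⬝ᵥ B *ᵥ z')) t := by
  convert hz.dotProduct (hz.mulVec B) using 1
  rw [hB.dotProduct_mulVec_comm z']
  ring

end

section

variable {ι : Type*} [Fintype ι]

theorem Matrix.dotProduct_inv_mulVec_mul_diagonal [DecidableEq ι] {R : Type*} [CommRing R]
    {A : Matrix ι ι R} (hA : IsUnit A.det) (w z : ι → R) :
    z ⬝ᵥ A⁻¹ *ᵥ (A * diagonal w) *ᵥ z = ∑ i, w i * z i ^ 2 := by
  rw [mulVec_mulVec, A.nonsing_inv_mul_cancel_left _ hA]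
  simp only [dotProduct, mulVec_diagonal]
  exact Finset.sum_congr rfl fun i _ => by ring

theorem mul_sum_sq_le_sum_mul_sq {c : ℝ} {w : ι → ℝ} (hw : ∀ i, c ≤ w i) (z : ι → ℝ) :
    c * ∑ i, z i ^ 2 ≤ ∑ i, w i * z i ^ 2 := by
  rw [Finset.mul_sum]
  exact Finset.sum_le_sum fun i _ => mul_le_mul_of_nonneg_right (hw i) (sq_nonneg _)

end

/-- Lyapunov decrease for the relative-frequency system: if
`z' = −κ A diag(w) z` with `A` symmetric positive definite and
`sin ε ≤ w(t)_k ≤ 1`, then `V(t) = z(t)ᵀ A⁻¹ z(t)` is differentiable with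
`V'(t) ≤ −κ sin ε · ‖z(t)‖²`. -/
theorem lyapunov_decrease_relative_frequency
    {m : ℕ} (A : Matrix (Fin m) (Fin m) ℝ) (hA : A.PosDef)
    (κ ε : ℝ) (hκ : 0 < κ) (hε : 0 < ε) (hε2 : ε < Real.pi / 2)
    (w : ℝ → Fin m → ℝ) (hw : ∀ t k, Real.sin ε ≤ w t k ∧ w t k ≤ 1)
    (z zd : ℝ → Fin m → ℝ)
    (hz : ∀ t k, HasDerivAt (fun s => z s k) (zd t k) t)
    (hdyn : ∀ t, zd t = -κ • (A * Matrix.diagonal (w t)).mulVec (z t)) :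
    ∀ t, ∃ v,
      HasDerivAt (fun s => z s ⬝ᵥ A⁻¹.mulVec (z s)) v t ∧
      v ≤ -(κ * Real.sin ε) * ∑ k, z t k ^ 2 := by
  intro t
  have hsymm : A⁻¹.IsSymm := (isHermitian_iff_isSymm.1 hA.isHermitian).inv
  refine ⟨_, hsymm.hasDerivAt_dotProduct_mulVec_self (hasDerivAt_pi.2 (hz t)), ?_⟩
  rw [hdyn t, mulVec_smul, dotProduct_smul,
    dotProduct_inv_mulVec_mul_diagonal hA.det_pos.ne'.isUnit, smul_eq_mul]
  have hsin : 0 ≤ Real.sin ε :=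
    Real.sin_nonneg_of_nonneg_of_le_pi hε.le (by linarith [Real.pi_pos])
  have hbound := mul_sum_sq_le_sum_mul_sq (fun k => (hw t k).1) (z t)
  have hnorm : 0 ≤ Real.sin ε * ∑ k, z t k ^ 2 :=
    mul_nonneg hsin (Finset.sum_nonneg fun k _ => sq_nonneg _)
  nlinarith [mul_le_mul_of_nonneg_left hbound hκ.le]
end

section
/- (Uniform asymptotic stability of the relative-frequency system.) Let A be a real symmetric positive definite m × m matrix, κ > 0, ε ∈ (0, π/2), and let w : ℝ → (Fin m → ℝ) satisfy sin ε ≤ w(t)_k ≤ 1 for all t and k. Suppose z : ℝ → (Fin m → ℝ) is differentiable in each coordinate and satisfies z'(t) = −κ A · diag(w(t)) · z(t) for all t. Then z(t) converges to the zero vector as t → ∞. -/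
/-!
`V(z) = zᵀ A⁻¹ z` is a Lyapunov function. Along the flow, `A⁻¹` cancels the factor `A`, so
`V' = -2κ zᵀ diag(w) z ≤ -2κ sin ε ‖z‖²`. Continuity and homogeneity of `V` on the compact unit
sphere make `V` comparable to `‖z‖²` from both sides, hence `V' ≤ -α V` with `α > 0`: `V`, and with
it `z`, decays exponentially.
-/

open Matrix Filter Topology

section HomogeneousQuadratic

variable {E : Type*} [NormedAddCommGroup E] [NormedSpace ℝ E] {Q : E → ℝ}

theorem eq_sq_norm_mul_of_homogeneous (hQ : ∀ (c : ℝ) x, Q (c • x) = c ^ 2 * Q x) (x : E) :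
    Q x = ‖x‖ ^ 2 * Q (‖x‖⁻¹ • x) := by
  rcases eq_or_ne x 0 with rfl | hx
  · simpa using hQ 0 0
  · rw [← hQ, smul_inv_smul₀ (norm_ne_zero_iff.2 hx)]

variable [ProperSpace E]

theorem exists_le_mul_sq_norm_of_homogeneous (hc : Continuous Q)
    (hQ : ∀ (c : ℝ) x, Q (c • x) = c ^ 2 * Q x) : ∃ b, 0 < b ∧ ∀ x, Q x ≤ b * ‖x‖ ^ 2 := by
  obtain ⟨b, hb⟩ := (isCompact_sphere (0 : E) 1).bddAbove_image hc.continuousOn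
  refine ⟨max b 1, by positivity, fun x => ?_⟩
  rw [eq_sq_norm_mul_of_homogeneous hQ x, mul_comm]
  rcases eq_or_ne x 0 with rfl | hx
  · simp
  · gcongr
    exact (hb ⟨_, mem_sphere_zero_iff_norm.2 (norm_smul_inv_norm (𝕜 := ℝ) hx), rfl⟩).trans
      (le_max_left _ _)

theorem exists_pos_mul_sq_norm_le_of_homogeneous (hc : Continuous Q)
    (hQ : ∀ (c : ℝ) x, Q (c • x) = c ^ 2 * Q x) (hpos : ∀ x, x ≠ 0 → 0 < Q x) :
    ∃ a, 0 < a ∧ ∀ x, a * ‖x‖ ^ 2 ≤ Q x := by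
  rcases (Metric.sphere (0 : E) 1).eq_empty_or_nonempty with hempty | hne
  · refine ⟨1, one_pos, fun x => ?_⟩
    obtain rfl : x = 0 := by
      by_contra hx
      exact hempty.subset (mem_sphere_zero_iff_norm.2 (norm_smul_inv_norm (𝕜 := ℝ) hx))
    simpa using (hQ 0 0).ge
  obtain ⟨u, hu, hmin⟩ := (isCompact_sphere (0 : E) 1).exists_isMinOn hne hc.continuousOn
  refine ⟨Q u, hpos u (ne_zero_of_mem_unit_sphere ⟨u, hu⟩), fun x => ?_⟩
  rw [eq_sq_norm_mul_of_homogeneous hQ x, mul_comm]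
  rcases eq_or_ne x 0 with rfl | hx
  · simp
  · gcongr
    exact hmin (mem_sphere_zero_iff_norm.2 (norm_smul_inv_norm (𝕜 := ℝ) hx))

end HomogeneousQuadratic

theorem Matrix.PosDef.exists_sq_norm_bounds {n : Type*} [Fintype n] {M : Matrix n n ℝ}
    (hM : M.PosDef) : ∃ a b, 0 < a ∧ 0 < b ∧
      ∀ x, a * ‖x‖ ^ 2 ≤ x ⬝ᵥ M *ᵥ x ∧ x ⬝ᵥ M *ᵥ x ≤ b * ‖x‖ ^ 2 := by
  have hc : Continuous fun x : n → ℝ => x ⬝ᵥ M *ᵥ x :=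
    continuous_id.dotProduct (continuous_const.matrix_mulVec continuous_id)
  have hQ (c : ℝ) (x : n → ℝ) : (c • x) ⬝ᵥ M *ᵥ (c • x) = c ^ 2 * (x ⬝ᵥ M *ᵥ x) := by
    simp only [mulVec_smul, smul_dotProduct, dotProduct_smul, smul_eq_mul]
    ring
  obtain ⟨a, ha, hlow⟩ := exists_pos_mul_sq_norm_le_of_homogeneous hc hQ
    fun x hx => hM.dotProduct_mulVec_pos hx
  obtain ⟨b, hb, hup⟩ := exists_le_mul_sq_norm_of_homogeneous hc hQ
  exact ⟨a, b, ha, hb, fun x => ⟨hlow x, hup x⟩⟩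

theorem sq_norm_le_dotProduct_self {n : Type*} [Fintype n] (x : n → ℝ) : ‖x‖ ^ 2 ≤ x ⬝ᵥ x := by
  have hnorm : ‖x‖ ≤ √(x ⬝ᵥ x) := (pi_norm_le_iff_of_nonneg (Real.sqrt_nonneg _)).2 fun k =>
    Real.abs_le_sqrt <| (sq (x k)).trans_le <| Finset.single_le_sum (f := fun j => x j * x j)
      (fun j _ => mul_self_nonneg _) (Finset.mem_univ k)
  calc ‖x‖ ^ 2 ≤ √(x ⬝ᵥ x) ^ 2 := by gcongr
    _ = x ⬝ᵥ x := Real.sq_sqrt (Finset.sum_nonneg fun k _ => mul_self_nonneg (x k))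

theorem mul_sq_norm_le_dotProduct_diagonal_mulVec {n : Type*} [Fintype n] [DecidableEq n]
    {s : ℝ} {w : n → ℝ} (hs : 0 ≤ s) (hw : ∀ k, s ≤ w k) (x : n → ℝ) :
    s * ‖x‖ ^ 2 ≤ x ⬝ᵥ diagonal w *ᵥ x :=
  calc s * ‖x‖ ^ 2 ≤ s * (x ⬝ᵥ x) := by gcongr; exact sq_norm_le_dotProduct_self x
    _ = ∑ k, s * (x k * x k) := Finset.mul_sum _ _ _
    _ ≤ ∑ k, x k * (w k * x k) :=
        Finset.sum_le_sum fun k _ => by nlinarith [mul_self_nonneg (x k), hw k]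
    _ = x ⬝ᵥ diagonal w *ᵥ x := by simp only [dotProduct, mulVec_diagonal]

theorem Matrix.IsHermitian.dotProduct_mulVec_comm {n : Type*} [Fintype n] {M : Matrix n n ℝ}
    (hM : M.IsHermitian) (u v : n → ℝ) : u ⬝ᵥ M *ᵥ v = v ⬝ᵥ M *ᵥ u := by
  have hMt : Mᵀ = M := by rw [← conjTranspose_eq_transpose_of_trivial]; exact hM
  rw [dotProduct_mulVec, ← mulVec_transpose, hMt, dotProduct_comm]

section Calculus

variable {n : Type*} [Fintype n] {f g : ℝ → n → ℝ} {f' g' : n → ℝ} {t : ℝ}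

theorem HasDerivAt.dotProduct_s10 (hf : HasDerivAt f f' t) (hg : HasDerivAt g g' t) :
    HasDerivAt (fun s => f s ⬝ᵥ g s) (f' ⬝ᵥ g t + f t ⬝ᵥ g') t := by
  change HasDerivAt (fun s => ∑ i, f s i * g s i) (∑ i, f' i * g t i + ∑ i, f t i * g' i) t
  rw [← Finset.sum_add_distrib]
  exact HasDerivAt.fun_sum fun i _ => (hasDerivAt_pi.1 hf i).mul (hasDerivAt_pi.1 hg i)

theorem HasDerivAt.matrix_mulVec (M : Matrix n n ℝ) (hf : HasDerivAt f f' t) :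
    HasDerivAt (fun s => M *ᵥ f s) (M *ᵥ f') t :=
  M.mulVecLin.toContinuousLinearMap.hasFDerivAt.comp_hasDerivAt t hf

theorem hasDerivAt_dotProduct_inv_mulVec [DecidableEq n] {A D : Matrix n n ℝ}
    (hA : A.IsHermitian) (hdet : IsUnit A.det) {κ : ℝ} (hf : HasDerivAt f (-κ • (A * D) *ᵥ f t) t) :
    HasDerivAt (fun s => f s ⬝ᵥ A⁻¹ *ᵥ f s) (-(2 * κ) * (f t ⬝ᵥ D *ᵥ f t)) t := by
  convert hf.dotProduct_s10 (hf.matrix_mulVec A⁻¹) using 1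
  rw [hA.inv.dotProduct_mulVec_comm, mulVec_smul, mulVec_mulVec, ← Matrix.mul_assoc,
    nonsing_inv_mul A hdet, Matrix.one_mul, dotProduct_smul, smul_eq_mul]
  ring

end Calculus

theorem le_mul_exp_neg_of_hasDerivAt_le_neg_mul {V V' : ℝ → ℝ} {α : ℝ}
    (hV : ∀ t, HasDerivAt V (V' t) t) (hdecay : ∀ t, V' t ≤ -α * V t) {t : ℝ} (ht : 0 ≤ t) :
    V t ≤ V 0 * Real.exp (-(α * t)) := by
  have hg (s : ℝ) : HasDerivAt (fun s => V s * Real.exp (α * s))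
      (V' s * Real.exp (α * s) + V s * (Real.exp (α * s) * α)) s :=
    (hV s).mul (((hasDerivAt_id s).const_mul α).exp.congr_deriv (by simp))
  have hanti : Antitone fun s => V s * Real.exp (α * s) := by
    refine antitone_of_deriv_nonpos (fun s => (hg s).differentiableAt) fun s => ?_
    rw [(hg s).deriv]
    nlinarith [hdecay s, Real.exp_pos (α * s)]
  have h0 := hanti ht
  simp only [mul_zero, Real.exp_zero, mul_one] at h0
  rwa [Real.exp_neg, ← div_eq_mul_inv, le_div_iff₀ (Real.exp_pos _)]

theorem tendsto_zero_of_hasDerivAt_le_neg_mul {E : Type*} [NormedAddCommGroup E] {z : ℝ → E}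
    {V V' : ℝ → ℝ} {a α : ℝ} (ha : 0 < a) (hα : 0 < α) (hV : ∀ t, HasDerivAt V (V' t) t)
    (hdecay : ∀ t, V' t ≤ -α * V t) (hlow : ∀ t, a * ‖z t‖ ^ 2 ≤ V t) :
    Tendsto z atTop (𝓝 0) := by
  have hexp : Tendsto (fun t => V 0 / a * Real.exp (-(α * t))) atTop (𝓝 0) := by
    simpa using (Real.tendsto_exp_neg_atTop_nhds_zero.comp
      (tendsto_id.const_mul_atTop hα)).const_mul (V 0 / a)
  refine squeeze_zero_norm' ?_ (by simpa using hexp.sqrt)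
  filter_upwards [eventually_ge_atTop 0] with t ht
  refine Real.le_sqrt_of_sq_le ?_
  rw [div_mul_eq_mul_div, le_div_iff₀ ha]
  linarith [hlow t, le_mul_exp_neg_of_hasDerivAt_le_neg_mul hV hdecay ht]

/-- Uniform asymptotic stability of the relative-frequency system: if
`z' = −κ A diag(w) z` with `A` symmetric positive definite and
`sin ε ≤ w(t)_k ≤ 1`, then `z(t) → 0` as `t → ∞`. -/
theorem relative_frequency_asymptotic_stability
    {m : ℕ} (A : Matrix (Fin m) (Fin m) ℝ) (hA : A.PosDef)
    (κ ε : ℝ) (hκ : 0 < κ) (hε : 0 < ε) (hε2 : ε < Real.pi / 2)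
    (w : ℝ → Fin m → ℝ) (hw : ∀ t k, Real.sin ε ≤ w t k ∧ w t k ≤ 1)
    (z zd : ℝ → Fin m → ℝ)
    (hz : ∀ t k, HasDerivAt (fun s => z s k) (zd t k) t)
    (hdyn : ∀ t, zd t = -κ • (A * Matrix.diagonal (w t)).mulVec (z t)) :
    Filter.Tendsto z Filter.atTop (nhds 0) := by
  have hsin : 0 < Real.sin ε := Real.sin_pos_of_pos_of_lt_pi hε (by linarith [Real.pi_pos])
  obtain ⟨a, b, ha, hb, hbounds⟩ := hA.inv.exists_sq_norm_bounds
  have hV (t : ℝ) : HasDerivAt (fun s => z s ⬝ᵥ A⁻¹ *ᵥ z s)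
      (-(2 * κ) * (z t ⬝ᵥ diagonal (w t) *ᵥ z t)) t := by
    refine hasDerivAt_dotProduct_inv_mulVec hA.1 ((isUnit_iff_isUnit_det A).1 hA.isUnit) ?_
    rw [← hdyn t]
    exact hasDerivAt_pi.2 (hz t)
  refine tendsto_zero_of_hasDerivAt_le_neg_mul ha (α := 2 * κ * Real.sin ε / b) (by positivity)
    hV (fun t => ?_) fun t => (hbounds (z t)).1
  calc -(2 * κ) * (z t ⬝ᵥ diagonal (w t) *ᵥ z t) ≤ -(2 * κ) * (Real.sin ε * ‖z t‖ ^ 2) :=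
        mul_le_mul_of_nonpos_left
          (mul_sq_norm_le_dotProduct_diagonal_mulVec hsin.le (fun k => (hw t k).1) _) (by linarith)
    _ = -(2 * κ * Real.sin ε / b) * (b * ‖z t‖ ^ 2) := by field_simp
    _ ≤ -(2 * κ * Real.sin ε / b) * (z t ⬝ᵥ A⁻¹ *ᵥ z t) :=
        mul_le_mul_of_nonpos_left (hbounds (z t)).2 (neg_nonpos.2 (by positivity))
end
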